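/- Let M be an A-module satisfying (I1)–(I4). Then for each x ∈ X there exists a unique element M_x ∈ M with M̄_x = M_x and M_x ≡ m_x mod M_{<0}. Moreover M_x ≡ m_x mod ⊕_{y<x} A_{<0} m_y, and the family (M_x)_{x∈X} is an A-basis of M. -/

import Mathlib

/-!
Lusztig's lemma. By (I4), `<` on `X` is well founded, and `M_x` is built by induction on `x`.
Once bar-invariant `M_y ≡ m_y` are known for `y < x`, they form with the remaining `m_y` a
family unitriangular with respect to `m`, hence linearly independent and spanning the same
lower spans, so `bar m_x - m_x = ∑_{y < x} r_y M_y`. Applying the involution shows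
`bar r_y = -r_y`, so `r_y = p_y - bar p_y` with `p_y ∈ A_{<0}` (the part of `r_y` in negative
degrees), and `M_x = m_x + ∑ p_y M_y` is bar-invariant. Uniqueness: a bar-invariant element of
`M_{<0}` vanishes, because at a maximal index of its support `bar` acts on its coefficient by the
bar involution of `A` (as `bar m` is again unitriangular), and `A_{<0} ∩ bar A_{<0} = 0`.
Finally, the family `(M_x)` is unitriangular, hence a basis.
-/

open scoped Classical

noncomputable section

namespace CellsCacti

/-- The group algebra `A = ℤ[𝔄]` of a totally ordered abelian group `𝔄`,
written exponentially: `A = ⊕_{a ∈ 𝔄} ℤ vᵃ`. -/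
abbrev GA (𝔄 : Type*) [AddCommGroup 𝔄] [LinearOrder 𝔄] [IsOrderedAddMonoid 𝔄] := AddMonoidAlgebra ℤ 𝔄

variable {𝔄 : Type*} [AddCommGroup 𝔄] [LinearOrder 𝔄] [IsOrderedAddMonoid 𝔄]

/-- The element `vᵃ` of `A = ℤ[𝔄]`. -/
def v (a : 𝔄) : GA 𝔄 := AddMonoidAlgebra.single a 1

/-- The bar involution of `A = ℤ[𝔄]`, determined by `vᵃ ↦ v⁻ᵃ`. -/
def Abar : GA 𝔄 ≃ₐ[ℤ] GA 𝔄 := AddMonoidAlgebra.domCongr ℤ ℤ (AddEquiv.neg 𝔄)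

/-- `A_{<0} = ⊕_{a < 0} ℤ vᵃ`, as a predicate on elements of `A`. -/
def Aneg (a : GA 𝔄) : Prop := ∀ γ ∈ a.coeff.support, γ < (0 : 𝔄)

/-- The setting of Section 2 of "Cells and cacti": an `A`-module `M` with an `A`-basis
`(m_x)_{x ∈ X}` indexed by a poset `X` (hypothesis (I1)), endowed with a `bar`-semilinear
involution (hypothesis (I2)) satisfying the triangularity condition (I3), such that lower
intervals of `X` are finite (hypothesis (I4)). -/
structure BarModule (𝔄 : Type*) [AddCommGroup 𝔄] [LinearOrder 𝔄] [IsOrderedAddMonoid 𝔄] (X : Type*) [PartialOrder X]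
    (Mod : Type*) [AddCommGroup Mod] [Module (GA 𝔄) Mod] where
  /-- (I1): the `A`-basis `(m_x)_{x ∈ X}` of `M`. -/
  m : Module.Basis X (GA 𝔄) Mod
  /-- (I2): a semilinear involution of `M` (additivity). -/
  bar : Mod →+ Mod
  /-- (I2): semilinearity of the involution with respect to the bar involution of `A`. -/
  bar_smul : ∀ (a : GA 𝔄) (x : Mod), bar (a • x) = Abar a • bar x
  /-- (I2): `bar` is an involution. -/
  bar_invol : ∀ x : Mod, bar (bar x) = x
  /-- (I3): `bar m_x ≡ m_x` modulo `⊕_{y < x} A m_y`. -/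
  I3 : ∀ x : X, bar (m x) - m x ∈ Submodule.span (GA 𝔄) (m '' {y | y < x})
  /-- (I4): the set `{y | y ≤ x}` is finite. -/
  I4 : ∀ x : X, {y | y ≤ x}.Finite

variable {X : Type*} [PartialOrder X] {Mod : Type*} [AddCommGroup Mod] [Module (GA 𝔄) Mod]

/-- `M_{<0} = ⊕_{x ∈ X} A_{<0} m_x`. -/
def BarModule.Mneg (S : BarModule 𝔄 X Mod) : Set Mod :=
  {u | ∀ x : X, Aneg (S.m.repr u x)}

/-- `M_skew = {m ∈ M | m + bar m = 0}`. -/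
def BarModule.Mskew (S : BarModule 𝔄 X Mod) : Set Mod :=
  {u | u + S.bar u = 0}

end CellsCacti

lemma wellFoundedLT_of_finite_Iic {ι : Type*} [Preorder ι] (h : ∀ i : ι, (Set.Iic i).Finite) :
    WellFoundedLT ι :=
  ⟨Subrelation.wf (fun hij => Set.ncard_lt_ncard (Set.Iic_ssubset_Iic.mpr hij) (h _))
    (measure fun i => (Set.Iic i).ncard).wf⟩

namespace Module.Basis

open Submodule

variable {ι R M : Type*} [PartialOrder ι] [Ring R] [AddCommGroup M] [Module R M]

def IsUnitriangular (b : Basis ι R M) (G : ι → M) : Prop :=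
  ∀ i, G i - b i ∈ span R (b '' Set.Iio i)

variable {b : Basis ι R M} {G : ι → M}

namespace IsUnitriangular

lemma repr_apply_of_not_lt (hG : b.IsUnitriangular G) {i j : ι} (hji : ¬ j < i) :
    b.repr (G i) j = b.repr (b i) j := by
  have hj : j ∉ (b.repr (G i - b i)).support := fun hj => hji (b.mem_span_image.mp (hG i) hj)
  rwa [Finsupp.notMem_support_iff, map_sub, Finsupp.sub_apply, sub_eq_zero] at hj

lemma repr_linearCombination (hG : b.IsUnitriangular G) (f : ι →₀ R) {j : ι}
    (hj : ∀ i ∈ f.support, ¬ j < i) : b.repr (Finsupp.linearCombination R G f) j = f j := by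
  have hcoeff : ∀ v : ι → M,
      b.repr (Finsupp.linearCombination R v f) j = ∑ i ∈ f.support, f i * b.repr (v i) j := by
    intro v
    simp [Finsupp.linearCombination_apply, Finsupp.sum, Finsupp.finsetSum_apply]
  calc b.repr (Finsupp.linearCombination R G f) j
      = ∑ i ∈ f.support, f i * b.repr (b i) j := by
        rw [hcoeff]
        exact Finset.sum_congr rfl fun i hi => by rw [hG.repr_apply_of_not_lt (hj i hi)]
    _ = f j := by rw [← hcoeff, b.repr_linearCombination]

lemma linearIndependent (hG : b.IsUnitriangular G) : LinearIndependent R G := by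
  refine linearIndependent_iff.mpr fun f hf => ?_
  by_contra hne
  obtain ⟨j, hj⟩ := Finset.exists_maximal (Finsupp.support_nonempty_iff.mpr hne)
  have hfj := hG.repr_linearCombination f fun i hi => hj.not_gt hi
  rw [hf, map_zero, Finsupp.zero_apply] at hfj
  exact Finsupp.mem_support_iff.mp hj.1 hfj.symm

lemma mem_span_image_Iic (hG : b.IsUnitriangular G) (i : ι) : G i ∈ span R (b '' Set.Iic i) := by
  simpa using add_mem (subset_span (Set.mem_image_of_mem b Set.self_mem_Iic))
    (span_mono (Set.image_mono Set.Iio_subset_Iic_self) (hG i))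

variable [WellFoundedLT ι]

lemma basis_mem_span_image_Iic (hG : b.IsUnitriangular G) (i : ι) :
    b i ∈ span R (G '' Set.Iic i) := by
  induction i using WellFoundedLT.induction with
  | _ i ih =>
  have hlt : span R (b '' Set.Iio i) ≤ span R (G '' Set.Iic i) :=
    span_le.mpr <| Set.image_subset_iff.mpr fun j hj =>
      span_mono (Set.image_mono (Set.Iic_subset_Iic.mpr (le_of_lt hj))) (ih j hj)
  simpa using sub_mem (subset_span (Set.mem_image_of_mem G Set.self_mem_Iic)) (hlt (hG i))

lemma span_image_Iio_le (hG : b.IsUnitriangular G) (i : ι) :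
    span R (b '' Set.Iio i) ≤ span R (G '' Set.Iio i) :=
  span_le.mpr <| Set.image_subset_iff.mpr fun j hj =>
    span_mono (Set.image_mono (Set.Iic_subset_Iio.mpr hj)) (hG.basis_mem_span_image_Iic j)

lemma top_le_span_range (hG : b.IsUnitriangular G) : ⊤ ≤ span R (Set.range G) :=
  b.span_eq ▸ span_le.mpr (Set.range_subset_iff.mpr fun i =>
    span_mono (Set.image_subset_range _ _) (hG.basis_mem_span_image_Iic i))

protected def basis (hG : b.IsUnitriangular G) : Basis ι R M :=
  .mk hG.linearIndependent hG.top_le_span_range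

@[simp]
lemma coe_basis (hG : b.IsUnitriangular G) : ⇑hG.basis = G :=
  Basis.coe_mk _ _

end IsUnitriangular

end Module.Basis

namespace CellsCacti

open Submodule

variable {𝔄 : Type*} [AddCommGroup 𝔄] [LinearOrder 𝔄] [IsOrderedAddMonoid 𝔄]

lemma Abar_coeff (a : GA 𝔄) (γ : 𝔄) : (Abar a).coeff γ = a.coeff (-γ) := by
  rw [Abar, AddMonoidAlgebra.coeff_domCongr]; rfl

def anegSubring : NonUnitalSubring (GA 𝔄) where
  carrier := {a | Aneg a}
  zero_mem' := by simp [Aneg]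
  add_mem' {a b} ha hb γ hγ := by
    rw [AddMonoidAlgebra.coeff_add] at hγ
    exact (Finset.mem_union.mp (Finsupp.support_add hγ)).elim (ha γ) (hb γ)
  neg_mem' {a} ha γ hγ := ha γ (by simpa using hγ)
  mul_mem' {a b} ha hb γ hγ := by
    obtain ⟨α, hα, β, hβ, rfl⟩ :=
      Finset.mem_add.mp (AddMonoidAlgebra.support_coeff_mul_subset a b hγ)
    exact add_neg (ha α hα) (hb β hβ)

lemma Aneg.eq_zero_of_Abar_eq {a : GA 𝔄} (ha : Aneg a) (h : Abar a = a) : a = 0 := by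
  rw [← AddMonoidAlgebra.coeff_eq_zero]
  ext γ
  by_contra hγ
  have hneg : a.coeff (-γ) ≠ 0 := by rwa [← Abar_coeff, h]
  exact lt_asymm (neg_pos.mpr (ha γ (Finsupp.mem_support_iff.mpr hγ)))
    (ha (-γ) (Finsupp.mem_support_iff.mpr hneg))

def negPart (a : GA 𝔄) : GA 𝔄 :=
  AddMonoidAlgebra.ofCoeff (a.coeff.filter (· < 0))

lemma negPart_coeff (a : GA 𝔄) (γ : 𝔄) :
    (negPart a).coeff γ = if γ < 0 then a.coeff γ else 0 :=
  Finsupp.filter_apply _ _ γ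

lemma negPart_zero : negPart (0 : GA 𝔄) = 0 := by
  rw [← AddMonoidAlgebra.coeff_eq_zero]
  ext γ
  simp [negPart_coeff]

lemma aneg_negPart (a : GA 𝔄) : Aneg (negPart a) := by
  intro γ hγ
  by_contra hγ0
  rw [Finsupp.mem_support_iff, negPart_coeff, if_neg hγ0] at hγ
  exact hγ rfl

lemma negPart_sub_Abar_negPart {a : GA 𝔄} (h : Abar a = -a) :
    negPart a - Abar (negPart a) = a := by
  have hskew (γ : 𝔄) : a.coeff (-γ) = -a.coeff γ := by
    rw [← Abar_coeff, h, AddMonoidAlgebra.coeff_neg, Finsupp.neg_apply]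
  ext γ
  rw [AddMonoidAlgebra.coeff_sub, Finsupp.sub_apply, Abar_coeff, negPart_coeff, negPart_coeff]
  rcases lt_trichotomy γ 0 with hγ | rfl | hγ
  · simp [hγ, hγ.not_gt]
  · have h0 : a.coeff 0 = 0 := by
      have h00 := hskew 0
      rw [neg_zero] at h00
      omega
    simp [h0]
  · simp [hγ, hγ.not_gt, hskew]

variable {X : Type*} [PartialOrder X] {Mod : Type*} [AddCommGroup Mod] [Module (GA 𝔄) Mod]

namespace BarModule

variable (S : BarModule 𝔄 X Mod)

lemma wellFoundedLT (S : BarModule 𝔄 X Mod) : WellFoundedLT X :=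
  wellFoundedLT_of_finite_Iic S.I4

lemma isUnitriangular_bar : S.m.IsUnitriangular (S.bar ∘ S.m) :=
  S.I3

lemma bar_linearCombination (G : X → Mod) (f : X →₀ GA 𝔄) :
    S.bar (Finsupp.linearCombination _ G f) =
      Finsupp.linearCombination _ (S.bar ∘ G) (f.mapRange Abar (map_zero _)) := by
  rw [Finsupp.linearCombination_apply, Finsupp.linearCombination_apply,
    Finsupp.sum_mapRange_index (by simp), Finsupp.sum, Finsupp.sum, map_sum]
  exact Finset.sum_congr rfl fun _ _ => S.bar_smul _ _

def mnegAddSubgroup : AddSubgroup Mod where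
  carrier := S.Mneg
  zero_mem' x := by
    rw [map_zero, Finsupp.zero_apply]
    exact anegSubring.zero_mem
  add_mem' hu hv x := by
    rw [map_add, Finsupp.add_apply]
    exact anegSubring.add_mem (hu x) (hv x)
  neg_mem' hu x := by
    rw [map_neg, Finsupp.neg_apply]
    exact anegSubring.neg_mem (hu x)

lemma smul_mem_Mneg {a : GA 𝔄} {u : Mod} (ha : Aneg a) (hu : u ∈ S.Mneg) : a • u ∈ S.Mneg :=
  fun x => by
    rw [map_smul, Finsupp.smul_apply, smul_eq_mul]
    exact anegSubring.mul_mem ha (hu x)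

lemma smul_basis_mem_Mneg {a : GA 𝔄} (ha : Aneg a) (y : X) : a • S.m y ∈ S.Mneg := by
  intro x
  rw [map_smul, S.m.repr_self, Finsupp.smul_single, smul_eq_mul, mul_one, Finsupp.single_apply]
  split_ifs
  exacts [ha, anegSubring.zero_mem]

lemma eq_zero_of_bar_eq_of_mem_Mneg {N : Mod} (hbar : S.bar N = N) (hN : N ∈ S.Mneg) :
    N = 0 := by
  set f := S.m.repr N
  by_contra hne
  obtain ⟨y, hy⟩ := Finset.exists_maximal
    (Finsupp.support_nonempty_iff.mpr ((map_ne_zero_iff _ S.m.repr.injective).mpr hne))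
  have hbar_coeff : S.m.repr (S.bar N) y = Abar (f y) := by
    rw [← S.m.linearCombination_repr N, S.bar_linearCombination]
    exact S.isUnitriangular_bar.repr_linearCombination _
      fun z hz => hy.not_gt (Finsupp.support_mapRange hz)
  rw [hbar] at hbar_coeff
  exact Finsupp.mem_support_iff.mp hy.1 ((hN y).eq_zero_of_Abar_eq hbar_coeff.symm)

def IsCanonical (x : X) (N : Mod) : Prop :=
  S.bar N = N ∧ N - S.m x ∈ S.Mneg ∧ N - S.m x ∈ span (GA 𝔄) (S.m '' Set.Iio x)

variable {S}

lemma IsCanonical.eq {x : X} {N N' : Mod} (hN : S.IsCanonical x N) (hbar : S.bar N' = N')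
    (hN' : N' - S.m x ∈ S.Mneg) : N' = N := by
  have hdiff := S.mnegAddSubgroup.sub_mem hN' hN.2.1
  rw [sub_sub_sub_cancel_right] at hdiff
  exact sub_eq_zero.mp (S.eq_zero_of_bar_eq_of_mem_Mneg (by rw [map_sub, hbar, hN.1]) hdiff)

variable (S)

lemma exists_bar_fixed {x : X} {G : X → Mod} (hG : S.m.IsUnitriangular G)
    (hfix : ∀ y < x, S.bar (G y) = G y) :
    ∃ p : X →₀ GA 𝔄, ↑p.support ⊆ Set.Iio x ∧ (∀ y, Aneg (p y)) ∧
      S.bar (S.m x + Finsupp.linearCombination _ G p) = S.m x + Finsupp.linearCombination _ G p := by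
  have := S.wellFoundedLT
  obtain ⟨l, hl, hlD⟩ :=
    (Finsupp.mem_span_image_iff_linearCombination _).mp (hG.span_image_Iio_le x (S.I3 x))
  rw [Finsupp.mem_supported] at hl
  set lc := Finsupp.linearCombination (GA 𝔄) G
  let barCoeff (f : X →₀ GA 𝔄) : X →₀ GA 𝔄 := f.mapRange Abar (map_zero _)
  have hbar_lc (f : X →₀ GA 𝔄) (hf : ↑f.support ⊆ Set.Iio x) : S.bar (lc f) = lc (barCoeff f) := by
    rw [S.bar_linearCombination, Finsupp.linearCombination_apply, Finsupp.linearCombination_apply]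
    exact Finsupp.sum_congr fun y hy =>
      by rw [Function.comp_apply, hfix y (hf (Finsupp.support_mapRange hy))]
  have hskew (y : X) : Abar (l y) = -l y := by
    have hsum : barCoeff l + l = 0 := linearIndependent_iff.mp hG.linearIndependent _ <| by
      rw [map_add, ← hbar_lc l hl, hlD, map_sub, S.bar_invol]
      abel
    exact eq_neg_of_add_eq_zero_left (by simpa [barCoeff] using DFunLike.congr_fun hsum y)
  set p := l.mapRange negPart negPart_zero
  have hp : ↑p.support ⊆ Set.Iio x := (Finset.coe_subset.mpr Finsupp.support_mapRange).trans hl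
  have hlp : l + barCoeff p = p := by
    ext1 y
    simp only [p, barCoeff, Finsupp.add_apply, Finsupp.mapRange_apply]
    exact eq_sub_iff_add_eq.mp (negPart_sub_Abar_negPart (hskew y)).symm
  refine ⟨p, hp, fun y => aneg_negPart _, ?_⟩
  calc S.bar (S.m x + lc p) = S.bar (S.m x) + lc (barCoeff p) := by rw [map_add, hbar_lc p hp]
    _ = S.m x + lc (l + barCoeff p) := by rw [map_add, hlD]; abel
    _ = S.m x + lc p := by rw [hlp]

lemma exists_isCanonical_of_forall_lt {x : X} {G : X → Mod} (hG : S.m.IsUnitriangular G)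
    (hGx : ∀ y < x, S.IsCanonical y (G y)) : ∃ N, S.IsCanonical x N := by
  obtain ⟨p, hpx, hpneg, hbar⟩ := S.exists_bar_fixed hG fun y hy => (hGx y hy).1
  refine ⟨S.m x + Finsupp.linearCombination _ G p, hbar, ?_⟩
  rw [add_sub_cancel_left, Finsupp.linearCombination_apply]
  constructor
  · refine S.mnegAddSubgroup.sum_mem fun y hy => ?_
    change p y • G y ∈ S.Mneg
    rw [← add_sub_cancel (S.m y) (G y), smul_add]
    exact S.mnegAddSubgroup.add_mem (S.smul_basis_mem_Mneg (hpneg y) y)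
      (S.smul_mem_Mneg (hpneg y) (hGx y (hpx hy)).2.1)
  · exact sum_mem fun y hy => smul_mem _ _
      (span_mono (Set.image_mono (Set.Iic_subset_Iio.mpr (hpx hy))) (hG.mem_span_image_Iic y))

lemma exists_isCanonical (x : X) : ∃ N, S.IsCanonical x N := by
  have := S.wellFoundedLT
  induction x using WellFoundedLT.induction with
  | _ x ih =>
  choose N hN using ih
  let G (y : X) : Mod := if hy : y < x then N y hy else S.m y
  have hGx (y : X) (hy : y < x) : S.IsCanonical y (G y) := by simpa [G, hy] using hN y hy
  refine S.exists_isCanonical_of_forall_lt (G := G) (fun y => ?_) hGx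
  by_cases hy : y < x
  · exact (hGx y hy).2.2
  · simp [G, hy]

end BarModule

/-- **Corollary 2.5** (cells and cacti): for each `x ∈ X` there is a unique `M_x ∈ M` with
`bar M_x = M_x` and `M_x ≡ m_x mod M_{<0}`; moreover `M_x ≡ m_x mod ⊕_{y < x} A_{<0} m_y`,
and the family `(M_x)_{x ∈ X}` is an `A`-basis of `M`. -/
theorem coro_kl_general (S : BarModule 𝔄 X Mod) :
    ∃ Mfam : X → Mod,
      (∀ x : X, S.bar (Mfam x) = Mfam x ∧ Mfam x - S.m x ∈ S.Mneg) ∧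
      (∀ x : X, ∀ N : Mod, S.bar N = N → N - S.m x ∈ S.Mneg → N = Mfam x) ∧
      (∀ x : X, ∀ y : X, Aneg (S.m.repr (Mfam x - S.m x) y) ∧
        (S.m.repr (Mfam x - S.m x) y ≠ 0 → y < x)) ∧
      (∃ b : Module.Basis X (GA 𝔄) Mod, ∀ x : X, b x = Mfam x) := by
  have := S.wellFoundedLT
  choose M hM using S.exists_isCanonical
  have hMtri : S.m.IsUnitriangular M := fun x => (hM x).2.2
  refine ⟨M, fun x => ⟨(hM x).1, (hM x).2.1⟩, fun x N hbar hN => (hM x).eq hbar hN,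
    fun x y => ⟨(hM x).2.1 y, fun hy => ?_⟩, hMtri.basis, congrFun hMtri.coe_basis⟩
  exact S.m.mem_span_image.mp (hM x).2.2 (Finsupp.mem_support_iff.mpr hy)

end CellsCacti
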